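/- Let R be a commutative ring, b1,…,b5 ∈ R, and let u ∈ R[[t]] be the unique formal power series with u = t^2·(1 + b1·u + b2·u^2 + b3·u^3 + b4·u^4 + b5·u^5). Then t·u′(t) = ∑_{n≥1} 2·A(n)·t^{2n} in R[[t]], where u′ is the formal derivative of u. Equivalently, for every n ≥ 1 the coefficient of t^{2n} in t·u′ equals 2·A(n), and all odd-degree coefficients of t·u′ vanish. (This encodes the expansion dx/(2y) = (∑_{n≥1} A(n)·t^{2n})·dt of the differential ω1 at infinity, since dx/(2y) = (t/2)·du on the curve.) -/

import Mathlib

open PowerSeries Finset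

/-- The power series `u` satisfies the curve equation at infinity:
`u = t² · (1 + b₁u + b₂u² + b₃u³ + b₄u⁴ + b₅u⁵)`. -/
def SatisfiesCurveEqAtInfinity {R : Type*} [CommRing R] (b1 b2 b3 b4 b5 : R)
    (u : PowerSeries R) : Prop :=
  u = X ^ 2 * (1 + C b1 * u + C b2 * u ^ 2 + C b3 * u ^ 3
      + C b4 * u ^ 4 + C b5 * u ^ 5)

/-- `A n = ∑ (n!/(k₀!k₁!k₂!k₃!k₄!k₅!)) b₁^{k₁}b₂^{k₂}b₃^{k₃}b₄^{k₄}b₅^{k₅}`, the sum over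
all `(k₀,…,k₅) ∈ ℕ⁶` with `k₀+k₁+k₂+k₃+k₄+k₅ = n` and `k₁+2k₂+3k₃+4k₄+5k₅+1 = n`. -/
noncomputable def Acoef {R : Type*} [CommRing R] (b1 b2 b3 b4 b5 : R) (n : ℕ) : R :=
  ∑ k ∈ (Fintype.piFinset fun _ : Fin 6 => Finset.range (n + 1)) |>.filter
      (fun k => (∑ i, k i) = n ∧ k 1 + 2 * k 2 + 3 * k 3 + 4 * k 4 + 5 * k 5 + 1 = n),
    (Nat.multinomial Finset.univ k : R) *
      (b1 ^ k 1 * b2 ^ k 2 * b3 ^ k 3 * b4 ^ k 4 * b5 ^ k 5)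

/-!
With `P(w) = 1 + b₁w + ⋯ + b₅w⁵` the curve equation reads `u = t² P(u)`, and by the multinomial
theorem `A(n)` is the coefficient of `w^{n-1}` in `P(w)^n`. The claim is then Lagrange inversion,
`[t^{2n-1}] u' = 2 [w^{n-1}] P(w)^n`: writing `u' = P(u)^n · P(u)^{-n} u'` and expanding `P(u)^n`
in powers of `u`, the term `u^k` contributes the residue of `u^{k-n} du`. This residue is
`ord u = 2` for `k = n - 1` and vanishes otherwise, `u^{k-n} du` being a power series or, for
`k < n - 1`, an exact differential. Exactness only gives `(n - 1 - k) · res = 0`, so the vanishing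
is proved for a universal series over the torsion-free ring `ℤ[x₀, x₁, …]` and then specialized.
The odd coefficients of `u` vanish by induction, since `t² P(u)` is even up to order `N + 2`
whenever `u` is even up to order `N`.
-/
namespace Polynomial

theorem coeff_sum_C_mul_X_pow_pow {R ι : Type*} [CommRing R] [Fintype ι] [DecidableEq ι]
    (b : ι → R) (e : ι → ℕ) (n m : ℕ) :
    ((∑ i, C (b i) * X ^ e i) ^ n).coeff m =
      ∑ k ∈ (piAntidiag univ n).filter (fun k ↦ ∑ i, e i * k i = m),
        (Nat.multinomial univ k : R) * ∏ i, b i ^ k i := by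
  rw [sum_pow_eq_sum_piAntidiag, finsetSum_coeff, sum_filter]
  refine sum_congr rfl fun k _ ↦ ?_
  have hterm : (Nat.multinomial univ k : R[X]) * ∏ i, (C (b i) * X ^ e i) ^ k i =
      C ((Nat.multinomial univ k : R) * ∏ i, b i ^ k i) * X ^ (∑ i, e i * k i) := by
    simp only [mul_pow, prod_mul_distrib, ← pow_mul, prod_pow_eq_pow_sum, map_mul, map_natCast,
      map_prod, map_pow]
    ring
  rw [hterm, coeff_C_mul_X_pow]
  simp_rw [eq_comm (a := m)]

end Polynomial

namespace PowerSeries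

variable {R : Type*} [CommRing R]

theorem derivative_X_sq_mul (g : R⟦X⟧) :
    derivative R (X ^ 2 * g) = X ^ 2 * derivative R g + 2 * X * g := by
  rw [Derivation.leibniz, Derivation.leibniz_pow, derivative_X]
  simp only [smul_eq_mul, nsmul_eq_mul]
  push_cast
  ring

theorem map_derivative {S : Type*} [CommRing S] (f : R →+* S) (φ : R⟦X⟧) :
    map f (derivative R φ) = derivative S (map f φ) := by
  ext n
  simp [coeff_derivative]

theorem succ_mul_coeff_inv_pow_mul_derivative_X_sq_mul (g : R⟦X⟧ˣ) (p : ℕ) :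
    ((p : R) + 1) *
      coeff (2 * p + 3) ((↑g⁻¹ : R⟦X⟧) ^ (p + 2) * derivative R (X ^ 2 * (g : R⟦X⟧))) = 0 := by
  set h : R⟦X⟧ := ↑g⁻¹
  have hgh : h * g = 1 := g.inv_mul
  have hderiv :
      derivative R (h ^ (p + 1)) = -(C ((p : R) + 1) * (h ^ (p + 2) * derivative R g)) := by
    rw [derivative_pow, derivative_inv, map_add, map_natCast, map_one]
    push_cast
    ring
  have hcoeff := congrArg (coeff (2 * p + 1)) hderiv
  rw [coeff_derivative, map_neg, coeff_C_mul] at hcoeff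
  have hsplit : h ^ (p + 2) * derivative R (X ^ 2 * (g : R⟦X⟧))
      = X ^ 2 * (h ^ (p + 2) * derivative R g) + C 2 * X * h ^ (p + 1) := by
    rw [derivative_X_sq_mul, map_ofNat]
    linear_combination (2 * X * h ^ (p + 1)) * hgh
  rw [hsplit, map_add, show 2 * p + 3 = 2 * p + 1 + 2 by ring, coeff_X_pow_mul, mul_assoc,
    coeff_C_mul, show 2 * p + 1 + 2 = 2 * p + 2 + 1 by ring, coeff_succ_X_mul]
  push_cast at hcoeff
  linear_combination hcoeff

theorem coeff_inv_pow_mul_derivative_X_sq_mul_eq_zero (g : R⟦X⟧ˣ)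
    (hg : constantCoeff (g : R⟦X⟧) = 1) (p : ℕ) :
    coeff (2 * p + 3) ((↑g⁻¹ : R⟦X⟧) ^ (p + 2) * derivative R (X ^ 2 * (g : R⟦X⟧))) = 0 := by
  let G : (MvPolynomial ℕ ℤ)⟦X⟧ := 1 + X * mk MvPolynomial.X
  have hG : IsUnit G := isUnit_iff_constantCoeff.mpr (by simp [G])
  have hG_residue : coeff (2 * p + 3)
      ((↑hG.unit⁻¹ : (MvPolynomial ℕ ℤ)⟦X⟧) ^ (p + 2) * derivative _ (X ^ 2 * G)) = 0 :=
    (mul_eq_zero.mp (succ_mul_coeff_inv_pow_mul_derivative_X_sq_mul hG.unit p)).resolve_left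
      (Nat.cast_add_one_ne_zero p)
  let f : MvPolynomial ℕ ℤ →+* R :=
    MvPolynomial.eval₂Hom (Int.castRingHom R) fun i ↦ coeff (i + 1) (g : R⟦X⟧)
  have hfG : map f G = g := by
    conv_rhs => rw [eq_X_mul_shift_add_const (g : R⟦X⟧), hg]
    simp only [G, map_add, map_one, map_mul, map_X, add_comm]
    congr 2
    ext i
    simp [f]
  have hfG_inv : map f ↑hG.unit⁻¹ = ↑g⁻¹ := by
    rw [← Units.ext (u := Units.map (map f).toMonoidHom hG.unit) hfG]
    rfl
  have := congrArg f hG_residue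
  rwa [← coeff_map, (map f).map_mul, (map f).map_pow, map_derivative, (map f).map_mul,
    (map f).map_pow, map_X, hfG, hfG_inv, map_zero] at this

theorem coeff_inv_pow_mul_derivative_X_sq_mul (g : R⟦X⟧ˣ) (hg : constantCoeff (g : R⟦X⟧) = 1)
    (q : ℕ) :
    coeff (2 * q + 1) ((↑g⁻¹ : R⟦X⟧) ^ (q + 1) * derivative R (X ^ 2 * (g : R⟦X⟧))) =
      if q = 0 then 2 else 0 := by
  rcases q with _ | p
  · have hexpand : (↑g⁻¹ : R⟦X⟧) ^ (0 + 1) * derivative R (X ^ 2 * (g : R⟦X⟧)) =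
        X ^ 2 * ((↑g⁻¹ : R⟦X⟧) * derivative R g) + 2 * X := by
      rw [derivative_X_sq_mul]
      linear_combination (2 * X : R⟦X⟧) * g.inv_mul
    rw [hexpand, map_add, coeff_X_pow_mul', if_neg (by omega), show (2 : R⟦X⟧) = C 2 from rfl,
      coeff_C_mul, coeff_one_X]
    simp
  · rw [if_neg p.succ_ne_zero, show 2 * (p + 1) + 1 = 2 * p + 3 by ring]
    exact coeff_inv_pow_mul_derivative_X_sq_mul_eq_zero g hg p

section LagrangeInversion

variable {u : R⟦X⟧} {g : R⟦X⟧ˣ}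

theorem coeff_pow_mul_inv_pow_mul_derivative (hu : u = X ^ 2 * (g : R⟦X⟧))
    (hg : constantCoeff (g : R⟦X⟧) = 1) (n w : ℕ) :
    coeff (2 * n + 1) (u ^ w * ((↑g⁻¹ : R⟦X⟧) ^ (n + 1) * derivative R u)) =
      if w = n then 2 else 0 := by
  have hpow : u ^ w = X ^ (2 * w) * (g : R⟦X⟧) ^ w := by rw [hu, mul_pow, pow_mul]
  rcases le_or_gt w n with hwn | hnw
  · obtain ⟨q, rfl⟩ := Nat.exists_eq_add_of_le hwn
    have hcancel : u ^ w * ((↑g⁻¹ : R⟦X⟧) ^ (w + q + 1) * derivative R u) =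
        X ^ (2 * w) * ((↑g⁻¹ : R⟦X⟧) ^ (q + 1) * derivative R (X ^ 2 * (g : R⟦X⟧))) := by
      rw [hpow, ← hu]
      have hgw : (g : R⟦X⟧) ^ w * (↑g⁻¹ : R⟦X⟧) ^ w = 1 := by
        rw [← mul_pow, g.mul_inv, one_pow]
      linear_combination (X ^ (2 * w) * (↑g⁻¹ : R⟦X⟧) ^ (q + 1) * derivative R u) * hgw
    rw [hcancel, show 2 * (w + q) + 1 = 2 * q + 1 + 2 * w by ring, coeff_X_pow_mul,
      coeff_inv_pow_mul_derivative_X_sq_mul g hg q]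
    simp
  · rw [hpow, mul_assoc, coeff_X_pow_mul', if_neg (by omega), if_neg (by omega)]

theorem constantCoeff_aeval_of_constantCoeff_eq_zero (hu : constantCoeff u = 0)
    (P : Polynomial R) :
    constantCoeff (Polynomial.aeval u P) = P.coeff 0 := by
  rw [Polynomial.aeval_def, Polynomial.hom_eval₂, hu, Polynomial.eval₂_at_zero]
  simp

theorem coeff_derivative_of_eq_X_sq_mul_aeval {P : Polynomial R} (hP : P.coeff 0 = 1)
    (hu : u = X ^ 2 * Polynomial.aeval u P) (n : ℕ) :
    coeff (2 * n + 1) (derivative R u) = 2 * (P ^ (n + 1)).coeff n := by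
  have hu0 : constantCoeff u = 0 := by rw [hu]; simp
  have hg0 : constantCoeff (Polynomial.aeval u P) = 1 := by
    rw [constantCoeff_aeval_of_constantCoeff_eq_zero hu0, hP]
  let g := (isUnit_iff_constantCoeff.mpr (hg0 ▸ isUnit_one)).unit
  have hg : (g : R⟦X⟧) = Polynomial.aeval u P := rfl
  have hsplit : derivative R u =
      Polynomial.aeval u (P ^ (n + 1)) * ((↑g⁻¹ : R⟦X⟧) ^ (n + 1) * derivative R u) := by
    rw [map_pow, ← hg, ← mul_assoc, ← mul_pow, g.mul_inv, one_pow, one_mul]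
  rw [hsplit, Polynomial.aeval_eq_sum_range' (n := (P ^ (n + 1)).natDegree + n + 1) (by omega),
    Finset.sum_mul, map_sum]
  simp_rw [smul_mul_assoc, coeff_smul, coeff_pow_mul_inv_pow_mul_derivative (g := g) hu hg0,
    smul_eq_mul, mul_ite, mul_zero, Finset.sum_ite_eq', Finset.mem_range]
  rw [if_pos (by omega), mul_comm]

end LagrangeInversion

def OddCoeffsVanishBelow (N : ℕ) (φ : R⟦X⟧) : Prop :=
  ∀ m < N, Odd m → coeff m φ = 0

namespace OddCoeffsVanishBelow

variable {N : ℕ} {φ ψ : R⟦X⟧}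

theorem one : OddCoeffsVanishBelow N (1 : R⟦X⟧) := fun m _ hm ↦ by
  rw [coeff_one, if_neg (by rintro rfl; exact Nat.not_odd_zero hm)]

theorem mul (hφ : OddCoeffsVanishBelow N φ) (hψ : OddCoeffsVanishBelow N ψ) :
    OddCoeffsVanishBelow N (φ * ψ) := by
  intro m hmN hm
  rw [coeff_mul]
  refine Finset.sum_eq_zero fun ⟨i, j⟩ hij ↦ ?_
  rw [HasAntidiagonal.mem_antidiagonal] at hij
  subst hij
  rcases Nat.even_or_odd i with hi | hi
  · rw [hψ j (by omega) ((Nat.odd_add'.mp hm).mpr hi), mul_zero]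
  · rw [hφ i (by omega) hi, zero_mul]

theorem pow (hφ : OddCoeffsVanishBelow N φ) (k : ℕ) : OddCoeffsVanishBelow N (φ ^ k) := by
  induction k with
  | zero => exact pow_zero φ ▸ one
  | succ k ih => exact pow_succ φ k ▸ ih.mul hφ

theorem aeval (hφ : OddCoeffsVanishBelow N φ) (P : Polynomial R) :
    OddCoeffsVanishBelow N (Polynomial.aeval φ P) := by
  intro m hmN hm
  rw [Polynomial.aeval_eq_sum_range, map_sum]
  exact Finset.sum_eq_zero fun i _ ↦ by rw [coeff_smul, hφ.pow i m hmN hm, smul_zero]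

theorem X_sq_mul (hφ : OddCoeffsVanishBelow N φ) :
    OddCoeffsVanishBelow (N + 2) (X ^ 2 * φ) := by
  intro m hmN hm
  rw [coeff_X_pow_mul']
  split_ifs with h2m
  · exact hφ (m - 2) (by omega) (by obtain ⟨k, rfl⟩ := hm; exact ⟨k - 1, by omega⟩)
  · rfl

theorem mono {M : ℕ} (hφ : OddCoeffsVanishBelow N φ) (hMN : M ≤ N) : OddCoeffsVanishBelow M φ :=
  fun m hmM ↦ hφ m (by omega)

end OddCoeffsVanishBelow

theorem coeff_eq_zero_of_odd_of_eq_X_sq_mul_aeval {u : R⟦X⟧} {P : Polynomial R}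
    (hu : u = X ^ 2 * Polynomial.aeval u P) {m : ℕ} (hm : Odd m) : coeff m u = 0 := by
  have hbelow : ∀ N, OddCoeffsVanishBelow N u := by
    intro N
    induction N with
    | zero => exact fun m hm ↦ absurd hm (Nat.not_lt_zero m)
    | succ N ih => exact hu ▸ ((ih.aeval P).X_sq_mul.mono (by omega))
  exact hbelow (m + 1) m (by omega) hm

end PowerSeries

noncomputable def curvePolynomial {R : Type*} [CommRing R] (b1 b2 b3 b4 b5 : R) : Polynomial R :=
  ∑ i : Fin 6, Polynomial.C (![1, b1, b2, b3, b4, b5] i) * Polynomial.X ^ (i : ℕ)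

section Curve

variable {R : Type*} [CommRing R] {b1 b2 b3 b4 b5 : R}

theorem coeff_zero_curvePolynomial : (curvePolynomial b1 b2 b3 b4 b5).coeff 0 = 1 := by
  simp [curvePolynomial, Fin.sum_univ_six, Polynomial.coeff_X_pow]

theorem SatisfiesCurveEqAtInfinity.eq_X_sq_mul_aeval {u : R⟦X⟧}
    (hu : SatisfiesCurveEqAtInfinity b1 b2 b3 b4 b5 u) :
    u = X ^ 2 * Polynomial.aeval u (curvePolynomial b1 b2 b3 b4 b5) := by
  have hP : Polynomial.aeval u (curvePolynomial b1 b2 b3 b4 b5) =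
      1 + C b1 * u + C b2 * u ^ 2 + C b3 * u ^ 3 + C b4 * u ^ 4 + C b5 * u ^ 5 := by
    simp [curvePolynomial, Fin.sum_univ_six]
  rwa [hP]

theorem acoef_succ_eq_coeff_pow (n : ℕ) :
    Acoef b1 b2 b3 b4 b5 (n + 1) = ((curvePolynomial b1 b2 b3 b4 b5) ^ (n + 1)).coeff n := by
  rw [curvePolynomial, Polynomial.coeff_sum_C_mul_X_pow_pow, Acoef]
  have hweight (k : Fin 6 → ℕ) :
      ∑ i : Fin 6, (i : ℕ) * k i = k 1 + 2 * k 2 + 3 * k 3 + 4 * k 4 + 5 * k 5 := by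
    simp [Fin.sum_univ_six]
  refine sum_congr ?_ fun k _ ↦ ?_
  · ext k
    simp only [mem_filter, mem_piAntidiag, Fintype.mem_piFinset, mem_range, mem_univ, ne_eq,
      hweight, implies_true, and_true]
    constructor
    · rintro ⟨-, hsum, hw⟩
      exact ⟨hsum, by omega⟩
    · rintro ⟨hsum, hw⟩
      refine ⟨fun i ↦ ?_, hsum, by omega⟩
      have : k i ≤ univ.sum k := single_le_sum (fun j _ ↦ Nat.zero_le (k j)) (mem_univ i)
      omega
  · simp [Fin.prod_univ_six]

end Curve

theorem stmt1 {R : Type*} [CommRing R] (b1 b2 b3 b4 b5 : R) (u : PowerSeries R)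
    (hu : SatisfiesCurveEqAtInfinity b1 b2 b3 b4 b5 u) :
    (∀ n : ℕ, 1 ≤ n →
        coeff (2 * n) (X * derivative R u) = 2 * Acoef b1 b2 b3 b4 b5 n) ∧
    ∀ m : ℕ, Odd m → coeff m (X * derivative R u) = 0 := by
  have hu_eq := hu.eq_X_sq_mul_aeval
  refine ⟨fun n hn ↦ ?_, fun m hm ↦ ?_⟩
  · obtain ⟨n, rfl⟩ := Nat.exists_eq_add_of_le' hn
    rw [show 2 * (n + 1) = 2 * n + 1 + 1 by ring, coeff_succ_X_mul,
      coeff_derivative_of_eq_X_sq_mul_aeval coeff_zero_curvePolynomial hu_eq,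
      acoef_succ_eq_coeff_pow]
  · obtain ⟨k, rfl⟩ := hm
    rw [coeff_succ_X_mul, coeff_derivative,
      coeff_eq_zero_of_odd_of_eq_X_sq_mul_aeval hu_eq ⟨k, rfl⟩, zero_mul]
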